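/- (Remark 2: no non-compliance.) Assume instead of monotonicity and relevance that D₁ = 1 and D₀ = 0 almost surely, so every individual is a complier, and assume principal ignorability with P(cl) > 0, P(cp) > 0, P(ch) > 0, P(Z=1, S=1) > 0 and P(Z=0, S=1) > 0. Then under randomization the principal average causal effect reduces to the observed survivor-case contrast: E[Y₁ − Y₀ | cl] = E[Y | Z=1, S=1] − E[Y | Z=0, S=1]. -/

import Mathlib

open MeasureTheory ProbabilityTheory
variable {Ω : Type*} [MeasurableSpace Ω]

/-- Conditional expectation of `X` given the event `A`: `E[X | A] = E[X·1_A] / P(A)`. -/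
noncomputable def cexp (P : Measure Ω) (A : Set Ω) (X : Ω → ℝ) : ℝ :=
  (∫ ω in A, X ω ∂P) / (P A).toReal

/-- Conditional probability of `B` given the event `A`: `P(B | A) = P(B ∩ A) / P(A)`. -/
noncomputable def cprob (P : Measure Ω) (A B : Set Ω) : ℝ :=
  (P (B ∩ A)).toReal / (P A).toReal

lemma cexp_congr_set (P : Measure Ω) {A B : Set Ω} (h : A =ᵐ[P] B) (X : Ω → ℝ) :
    cexp P A X = cexp P B X := by
  unfold cexp
  rw [measure_congr h, setIntegral_congr_set h]

lemma cexp_union (P : Measure Ω) [IsProbabilityMeasure P]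
    {A B : Set Ω} {X : Ω → ℝ} (hB : MeasurableSet B)
    (hd : Disjoint A B) (hPA : 0 < (P A).toReal) (hPB : 0 < (P B).toReal)
    (hX : Integrable X P) (heq : cexp P A X = cexp P B X) :
    cexp P (A ∪ B) X = cexp P A X := by
  have hPU : (P (A ∪ B)).toReal = (P A).toReal + (P B).toReal := by
    rw [measure_union hd hB, ENNReal.toReal_add (measure_ne_top P A) (measure_ne_top P B)]
  have hIU : ∫ ω in A ∪ B, X ω ∂P = (∫ ω in A, X ω ∂P) + ∫ ω in B, X ω ∂P :=
    setIntegral_union hd hB hX.integrableOn hX.integrableOn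
  have hIB : ∫ ω in B, X ω ∂P = cexp P A X * (P B).toReal := by
    rw [heq]; unfold cexp; field_simp
  unfold cexp at *
  rw [hIU, hIB, hPU]
  have h1 : (P A).toReal ≠ 0 := ne_of_gt hPA
  have h2 : (P A).toReal + (P B).toReal ≠ 0 := by positivity
  field_simp

lemma cexp_reduce (P : Measure Ω) {A B : Set Ω} {Y W : Ω → ℝ} {p : ℝ}
    (hm : (P A).toReal = p * (P B).toReal)
    (hi : ∫ ω in A, Y ω ∂P = p * ∫ ω in B, W ω ∂P)
    (hp : p ≠ 0) :
    cexp P A Y = cexp P B W := by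
  unfold cexp
  rw [hm, hi, mul_div_mul_left _ _ hp]

lemma indep_ite_mul (P : Measure Ω) [IsProbabilityMeasure P]
    {Z : Ω → ℝ} {V : Ω → ℝ × ℝ × ℝ × ℝ × ℝ × ℝ}
    (hZm : Measurable Z) (hindep : IndepFun Z V P) (a : ℝ)
    (g : ℝ × ℝ × ℝ × ℝ × ℝ × ℝ → ℝ) (hg : Measurable g)
    (hgi : AEStronglyMeasurable (fun ω => g (V ω)) P) :
    ∫ ω, (if Z ω = a then (1:ℝ) else 0) * g (V ω) ∂P
      = (P {ω | Z ω = a}).toReal * ∫ ω, g (V ω) ∂P := by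
  have hf : Measurable (fun z : ℝ => if z = a then (1:ℝ) else 0) :=
    Measurable.ite (measurableSet_eq) measurable_const measurable_const
  have hcomp : IndepFun (fun ω => if Z ω = a then (1:ℝ) else 0) (fun ω => g (V ω)) P :=
    hindep.comp hf hg
  have hsm : MeasurableSet {ω | Z ω = a} := hZm (measurableSet_singleton a)
  have hiieq : (fun ω => if Z ω = a then (1:ℝ) else 0)
      = Set.indicator {ω | Z ω = a} (fun _ => 1) := by
    ext ω; simp [Set.indicator_apply]
  have h1 : ∫ ω, (if Z ω = a then (1:ℝ) else 0) ∂P = (P {ω | Z ω = a}).toReal := by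
    rw [hiieq]; exact integral_indicator_one hsm
  have hmul := hcomp.integral_mul_eq_mul_integral ((hf.comp hZm).aestronglyMeasurable) hgi
  calc ∫ ω, (if Z ω = a then (1:ℝ) else 0) * g (V ω) ∂P
      = ∫ ω, ((fun ω => if Z ω = a then (1:ℝ) else 0) * fun ω => g (V ω)) ω ∂P := by
        simp [Pi.mul_apply]
    _ = (∫ ω, (if Z ω = a then (1:ℝ) else 0) ∂P) * ∫ ω, g (V ω) ∂P := hmul
    _ = (P {ω | Z ω = a}).toReal * ∫ ω, g (V ω) ∂P := by rw [h1]

/-- Remark 2: no non-compliance: If `D₁ = 1` and `D₀ = 0` almost surely, principal ignorability holds, and `P(cl), P(cp), P(ch), P(Z=1, S=1), P(Z=0, S=1)` are all positive, then under randomization `E[Y₁ − Y₀ | cl] = E[Y | Z=1, S=1] − E[Y | Z=0, S=1]`. -/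
theorem stmt_13
    (P : Measure Ω) [IsProbabilityMeasure P]
    (Z D0 D1 S0 S1 Y0 Y1 D S Y : Ω → ℝ)
    (hZm : Measurable Z) (hD0m : Measurable D0) (hD1m : Measurable D1)
    (hS0m : Measurable S0) (hS1m : Measurable S1)
    (hY0i : Integrable Y0 P) (hY1i : Integrable Y1 P)
    (hZb : ∀ ω, Z ω = 0 ∨ Z ω = 1)
    (hD0b : ∀ ω, D0 ω = 0 ∨ D0 ω = 1)
    (hD1b : ∀ ω, D1 ω = 0 ∨ D1 ω = 1)
    (hS0b : ∀ ω, S0 ω = 0 ∨ S0 ω = 1)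
    (hS1b : ∀ ω, S1 ω = 0 ∨ S1 ω = 1)
    (hD : ∀ ω, D ω = Z ω * D1 ω + (1 - Z ω) * D0 ω)
    (hS : ∀ ω, S ω = D ω * S1 ω + (1 - D ω) * S0 ω)
    (hY : ∀ ω, Y ω = D ω * Y1 ω + (1 - D ω) * Y0 ω)
    (hindep : IndepFun Z (fun ω => (D0 ω, D1 ω, S0 ω, S1 ω, Y0 ω, Y1 ω)) P)
    (hZpos : 0 < (P {ω | Z ω = 1}).toReal)
    (hZlt1 : (P {ω | Z ω = 1}).toReal < 1)
    (hD1one : ∀ᵐ ω ∂P, D1 ω = 1)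
    (hD0zero : ∀ᵐ ω ∂P, D0 ω = 0)
    (hclpos : 0 < (P {ω | D1 ω = 1 ∧ D0 ω = 0 ∧ S1 ω = 1 ∧ S0 ω = 1}).toReal)
    (hcppos : 0 < (P {ω | D1 ω = 1 ∧ D0 ω = 0 ∧ S1 ω = 1 ∧ S0 ω = 0}).toReal)
    (hchpos : 0 < (P {ω | D1 ω = 1 ∧ D0 ω = 0 ∧ S1 ω = 0 ∧ S0 ω = 1}).toReal)
    (hPI1 : cexp P {ω | D1 ω = 1 ∧ D0 ω = 0 ∧ S1 ω = 1 ∧ S0 ω = 1} Y1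
      = cexp P {ω | D1 ω = 1 ∧ D0 ω = 0 ∧ S1 ω = 1 ∧ S0 ω = 0} Y1)
    (hPI0 : cexp P {ω | D1 ω = 1 ∧ D0 ω = 0 ∧ S1 ω = 1 ∧ S0 ω = 1} Y0
      = cexp P {ω | D1 ω = 1 ∧ D0 ω = 0 ∧ S1 ω = 0 ∧ S0 ω = 1} Y0)
    (hZ1S1 : 0 < (P {ω | Z ω = 1 ∧ S ω = 1}).toReal)
    (hZ0S1 : 0 < (P {ω | Z ω = 0 ∧ S ω = 1}).toReal)
    :
    cexp P {ω | D1 ω = 1 ∧ D0 ω = 0 ∧ S1 ω = 1 ∧ S0 ω = 1} (fun ω => Y1 ω - Y0 ω)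
      = cexp P {ω | Z ω = 1 ∧ S ω = 1} Y - cexp P {ω | Z ω = 0 ∧ S ω = 1} Y := by
  -- abbreviations
  set cl' := {ω | S1 ω = 1 ∧ S0 ω = 1} with hcl'def
  set cp' := {ω | S1 ω = 1 ∧ S0 ω = 0} with hcp'def
  set ch' := {ω | S1 ω = 0 ∧ S0 ω = 1} with hch'def
  -- measurability
  have hDm : Measurable D := by
    have hde : D = fun ω => Z ω * D1 ω + (1 - Z ω) * D0 ω := funext hD
    rw [hde]; exact (hZm.mul hD1m).add ((measurable_const.sub hZm).mul hD0m)
  have hSm : Measurable S := by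
    have hse : S = fun ω => D ω * S1 ω + (1 - D ω) * S0 ω := funext hS
    rw [hse]; exact (hDm.mul hS1m).add ((measurable_const.sub hDm).mul hS0m)
  have hT1m : MeasurableSet {ω | Z ω = 1} := hZm (measurableSet_singleton 1)
  have hT0m : MeasurableSet {ω | Z ω = 0} := hZm (measurableSet_singleton 0)
  have hB1m : MeasurableSet {ω | S1 ω = 1} := hS1m (measurableSet_singleton 1)
  have hB0m : MeasurableSet {ω | S0 ω = 1} := hS0m (measurableSet_singleton 1)
  have hcl'm : MeasurableSet cl' :=
    (hS1m (measurableSet_singleton 1)).inter (hS0m (measurableSet_singleton 1))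
  have hcp'm : MeasurableSet cp' :=
    (hS1m (measurableSet_singleton 1)).inter (hS0m (measurableSet_singleton 0))
  have hch'm : MeasurableSet ch' :=
    (hS1m (measurableSet_singleton 0)).inter (hS0m (measurableSet_singleton 1))
  have hA1m : MeasurableSet {ω | Z ω = 1 ∧ S ω = 1} :=
    hT1m.inter (hSm (measurableSet_singleton 1))
  have hA0m : MeasurableSet {ω | Z ω = 0 ∧ S ω = 1} :=
    hT0m.inter (hSm (measurableSet_singleton 1))
  -- a.e. D = Z
  have hDZ : ∀ᵐ ω ∂P, D ω = Z ω := by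
    filter_upwards [hD1one, hD0zero] with ω h1 h0
    rw [hD ω, h1, h0]; ring
  -- a.e. set equalities for principal strata
  have hclae : {ω | D1 ω = 1 ∧ D0 ω = 0 ∧ S1 ω = 1 ∧ S0 ω = 1} =ᵐ[P] cl' := by
    rw [Filter.eventuallyEq_set]
    filter_upwards [hD1one, hD0zero] with ω h1 h0
    simp [hcl'def, Set.mem_setOf_eq, h1, h0]
  have hcpae : {ω | D1 ω = 1 ∧ D0 ω = 0 ∧ S1 ω = 1 ∧ S0 ω = 0} =ᵐ[P] cp' := by
    rw [Filter.eventuallyEq_set]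
    filter_upwards [hD1one, hD0zero] with ω h1 h0
    simp [hcp'def, Set.mem_setOf_eq, h1, h0]
  have hchae : {ω | D1 ω = 1 ∧ D0 ω = 0 ∧ S1 ω = 0 ∧ S0 ω = 1} =ᵐ[P] ch' := by
    rw [Filter.eventuallyEq_set]
    filter_upwards [hD1one, hD0zero] with ω h1 h0
    simp [hch'def, Set.mem_setOf_eq, h1, h0]
  have hclpos' : 0 < (P cl').toReal := by rwa [measure_congr hclae] at hclpos
  have hcppos' : 0 < (P cp').toReal := by rwa [measure_congr hcpae] at hcppos
  have hchpos' : 0 < (P ch').toReal := by rwa [measure_congr hchae] at hchpos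
  have hPI1' : cexp P cl' Y1 = cexp P cp' Y1 := by
    rw [← cexp_congr_set P hclae Y1, ← cexp_congr_set P hcpae Y1]; exact hPI1
  have hPI0' : cexp P cl' Y0 = cexp P ch' Y0 := by
    rw [← cexp_congr_set P hclae Y0, ← cexp_congr_set P hchae Y0]; exact hPI0
  -- unions
  have hB1union : {ω | S1 ω = 1} = cl' ∪ cp' := by
    ext ω
    simp only [hcl'def, hcp'def, Set.mem_setOf_eq, Set.mem_union]
    constructor
    · intro h; rcases hS0b ω with h0 | h0
      · exact Or.inr ⟨h, h0⟩
      · exact Or.inl ⟨h, h0⟩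
    · rintro (⟨h, _⟩ | ⟨h, _⟩) <;> exact h
  have hB0union : {ω | S0 ω = 1} = cl' ∪ ch' := by
    ext ω
    simp only [hcl'def, hch'def, Set.mem_setOf_eq, Set.mem_union]
    constructor
    · intro h; rcases hS1b ω with h0 | h0
      · exact Or.inr ⟨h0, h⟩
      · exact Or.inl ⟨h0, h⟩
    · rintro (⟨_, h⟩ | ⟨_, h⟩) <;> exact h
  have hd1 : Disjoint cl' cp' := by
    rw [Set.disjoint_left]
    rintro ω ⟨_, h1⟩ ⟨_, h0⟩
    rw [h1] at h0; norm_num at h0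
  have hd0 : Disjoint cl' ch' := by
    rw [Set.disjoint_left]
    rintro ω ⟨h1, _⟩ ⟨h0, _⟩
    rw [h1] at h0; norm_num at h0
  have hmerge1 : cexp P {ω | S1 ω = 1} Y1 = cexp P cl' Y1 := by
    rw [hB1union]; exact cexp_union P hcp'm hd1 hclpos' hcppos' hY1i hPI1'
  have hmerge0 : cexp P {ω | S0 ω = 1} Y0 = cexp P cl' Y0 := by
    rw [hB0union]; exact cexp_union P hch'm hd0 hclpos' hchpos' hY0i hPI0'
  -- independence consequences
  have hiteS1m : Measurable (fun ω => if S1 ω = 1 then (1:ℝ) else 0) :=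
    Measurable.ite (hS1m (measurableSet_singleton 1)) measurable_const measurable_const
  have hiteS0m : Measurable (fun ω => if S0 ω = 1 then (1:ℝ) else 0) :=
    Measurable.ite (hS0m (measurableSet_singleton 1)) measurable_const measurable_const
  have hprojS1 : Measurable (fun v : ℝ × ℝ × ℝ × ℝ × ℝ × ℝ => v.2.2.2.1) :=
    measurable_id.snd.snd.snd.fst
  have hprojS0 : Measurable (fun v : ℝ × ℝ × ℝ × ℝ × ℝ × ℝ => v.2.2.1) :=
    measurable_id.snd.snd.fst
  have hprojY1 : Measurable (fun v : ℝ × ℝ × ℝ × ℝ × ℝ × ℝ => v.2.2.2.2.2) :=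
    measurable_id.snd.snd.snd.snd.snd
  have hprojY0 : Measurable (fun v : ℝ × ℝ × ℝ × ℝ × ℝ × ℝ => v.2.2.2.2.1) :=
    measurable_id.snd.snd.snd.snd.fst
  have hgS1m : Measurable (fun v : ℝ × ℝ × ℝ × ℝ × ℝ × ℝ => if v.2.2.2.1 = 1 then (1:ℝ) else 0) :=
    Measurable.ite (hprojS1 (measurableSet_singleton 1)) measurable_const measurable_const
  have hgS0m : Measurable (fun v : ℝ × ℝ × ℝ × ℝ × ℝ × ℝ => if v.2.2.1 = 1 then (1:ℝ) else 0) :=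
    Measurable.ite (hprojS0 (measurableSet_singleton 1)) measurable_const measurable_const
  have hgY1m : Measurable
      (fun v : ℝ × ℝ × ℝ × ℝ × ℝ × ℝ => v.2.2.2.2.2 * (if v.2.2.2.1 = 1 then (1:ℝ) else 0)) :=
    hprojY1.mul hgS1m
  have hgY0m : Measurable
      (fun v : ℝ × ℝ × ℝ × ℝ × ℝ × ℝ => v.2.2.2.2.1 * (if v.2.2.1 = 1 then (1:ℝ) else 0)) :=
    hprojY0.mul hgS0m
  have hgS1i : AEStronglyMeasurable (fun ω => if S1 ω = 1 then (1:ℝ) else 0) P :=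
    hiteS1m.aestronglyMeasurable
  have hgS0i : AEStronglyMeasurable (fun ω => if S0 ω = 1 then (1:ℝ) else 0) P :=
    hiteS0m.aestronglyMeasurable
  have hgY1i : AEStronglyMeasurable (fun ω => Y1 ω * (if S1 ω = 1 then (1:ℝ) else 0)) P :=
    hY1i.aestronglyMeasurable.mul hgS1i
  have hgY0i : AEStronglyMeasurable (fun ω => Y0 ω * (if S0 ω = 1 then (1:ℝ) else 0)) P :=
    hY0i.aestronglyMeasurable.mul hgS0i
  -- key independence identities, Z = 1 side
  have hmeas1 : (P ({ω | Z ω = 1} ∩ {ω | S1 ω = 1})).toReal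
      = (P {ω | Z ω = 1}).toReal * (P {ω | S1 ω = 1}).toReal := by
    have h := indep_ite_mul P hZm hindep 1
      (fun v => if v.2.2.2.1 = 1 then (1:ℝ) else 0) hgS1m hgS1i
    calc (P ({ω | Z ω = 1} ∩ {ω | S1 ω = 1})).toReal
        = ∫ ω, (({ω | Z ω = 1} ∩ {ω | S1 ω = 1}).indicator 1) ω ∂P :=
          (integral_indicator_one (hT1m.inter hB1m)).symm
      _ = ∫ ω, (if Z ω = 1 then (1:ℝ) else 0) * (if S1 ω = 1 then (1:ℝ) else 0) ∂P := by
          apply integral_congr_ae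
          filter_upwards with ω
          by_cases h1 : Z ω = 1 <;> by_cases h2 : S1 ω = 1 <;>
            simp [Set.indicator_apply, Set.mem_inter_iff, Set.mem_setOf_eq, h1, h2]
      _ = (P {ω | Z ω = 1}).toReal * ∫ ω, (if S1 ω = 1 then (1:ℝ) else 0) ∂P := h
      _ = (P {ω | Z ω = 1}).toReal * (P {ω | S1 ω = 1}).toReal := by
          congr 1
          calc ∫ ω, (if S1 ω = 1 then (1:ℝ) else 0) ∂P
              = ∫ ω, ({ω | S1 ω = 1}.indicator 1) ω ∂P := by
                apply integral_congr_ae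
                filter_upwards with ω
                by_cases h2 : S1 ω = 1 <;> simp [Set.indicator_apply, Set.mem_setOf_eq, h2]
            _ = (P {ω | S1 ω = 1}).toReal := integral_indicator_one hB1m
  have hint1' : ∫ ω in {ω | Z ω = 1} ∩ {ω | S1 ω = 1}, Y1 ω ∂P
      = (P {ω | Z ω = 1}).toReal * ∫ ω in {ω | S1 ω = 1}, Y1 ω ∂P := by
    have h := indep_ite_mul P hZm hindep 1
      (fun v => v.2.2.2.2.2 * (if v.2.2.2.1 = 1 then (1:ℝ) else 0)) hgY1m hgY1i
    calc ∫ ω in {ω | Z ω = 1} ∩ {ω | S1 ω = 1}, Y1 ω ∂P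
        = ∫ ω, (({ω | Z ω = 1} ∩ {ω | S1 ω = 1}).indicator Y1) ω ∂P :=
          (integral_indicator (hT1m.inter hB1m)).symm
      _ = ∫ ω, (if Z ω = 1 then (1:ℝ) else 0) * (Y1 ω * (if S1 ω = 1 then (1:ℝ) else 0)) ∂P := by
          apply integral_congr_ae
          filter_upwards with ω
          by_cases h1 : Z ω = 1 <;> by_cases h2 : S1 ω = 1 <;>
            simp [Set.indicator_apply, Set.mem_inter_iff, Set.mem_setOf_eq, h1, h2]
      _ = (P {ω | Z ω = 1}).toReal * ∫ ω, Y1 ω * (if S1 ω = 1 then (1:ℝ) else 0) ∂P := h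
      _ = (P {ω | Z ω = 1}).toReal * ∫ ω in {ω | S1 ω = 1}, Y1 ω ∂P := by
          congr 1
          calc ∫ ω, Y1 ω * (if S1 ω = 1 then (1:ℝ) else 0) ∂P
              = ∫ ω, ({ω | S1 ω = 1}.indicator Y1) ω ∂P := by
                apply integral_congr_ae
                filter_upwards with ω
                by_cases h2 : S1 ω = 1 <;> simp [Set.indicator_apply, Set.mem_setOf_eq, h2]
            _ = ∫ ω in {ω | S1 ω = 1}, Y1 ω ∂P := integral_indicator hB1m
  -- key independence identities, Z = 0 side
  have hmeas0 : (P ({ω | Z ω = 0} ∩ {ω | S0 ω = 1})).toReal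
      = (P {ω | Z ω = 0}).toReal * (P {ω | S0 ω = 1}).toReal := by
    have h := indep_ite_mul P hZm hindep 0
      (fun v => if v.2.2.1 = 1 then (1:ℝ) else 0) hgS0m hgS0i
    calc (P ({ω | Z ω = 0} ∩ {ω | S0 ω = 1})).toReal
        = ∫ ω, (({ω | Z ω = 0} ∩ {ω | S0 ω = 1}).indicator 1) ω ∂P :=
          (integral_indicator_one (hT0m.inter hB0m)).symm
      _ = ∫ ω, (if Z ω = 0 then (1:ℝ) else 0) * (if S0 ω = 1 then (1:ℝ) else 0) ∂P := by
          apply integral_congr_ae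
          filter_upwards with ω
          by_cases h1 : Z ω = 0 <;> by_cases h2 : S0 ω = 1 <;>
            simp [Set.indicator_apply, Set.mem_inter_iff, Set.mem_setOf_eq, h1, h2]
      _ = (P {ω | Z ω = 0}).toReal * ∫ ω, (if S0 ω = 1 then (1:ℝ) else 0) ∂P := h
      _ = (P {ω | Z ω = 0}).toReal * (P {ω | S0 ω = 1}).toReal := by
          congr 1
          calc ∫ ω, (if S0 ω = 1 then (1:ℝ) else 0) ∂P
              = ∫ ω, ({ω | S0 ω = 1}.indicator 1) ω ∂P := by
                apply integral_congr_ae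
                filter_upwards with ω
                by_cases h2 : S0 ω = 1 <;> simp [Set.indicator_apply, Set.mem_setOf_eq, h2]
            _ = (P {ω | S0 ω = 1}).toReal := integral_indicator_one hB0m
  have hint0' : ∫ ω in {ω | Z ω = 0} ∩ {ω | S0 ω = 1}, Y0 ω ∂P
      = (P {ω | Z ω = 0}).toReal * ∫ ω in {ω | S0 ω = 1}, Y0 ω ∂P := by
    have h := indep_ite_mul P hZm hindep 0
      (fun v => v.2.2.2.2.1 * (if v.2.2.1 = 1 then (1:ℝ) else 0)) hgY0m hgY0i
    calc ∫ ω in {ω | Z ω = 0} ∩ {ω | S0 ω = 1}, Y0 ω ∂P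
        = ∫ ω, (({ω | Z ω = 0} ∩ {ω | S0 ω = 1}).indicator Y0) ω ∂P :=
          (integral_indicator (hT0m.inter hB0m)).symm
      _ = ∫ ω, (if Z ω = 0 then (1:ℝ) else 0) * (Y0 ω * (if S0 ω = 1 then (1:ℝ) else 0)) ∂P := by
          apply integral_congr_ae
          filter_upwards with ω
          by_cases h1 : Z ω = 0 <;> by_cases h2 : S0 ω = 1 <;>
            simp [Set.indicator_apply, Set.mem_inter_iff, Set.mem_setOf_eq, h1, h2]
      _ = (P {ω | Z ω = 0}).toReal * ∫ ω, Y0 ω * (if S0 ω = 1 then (1:ℝ) else 0) ∂P := h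
      _ = (P {ω | Z ω = 0}).toReal * ∫ ω in {ω | S0 ω = 1}, Y0 ω ∂P := by
          congr 1
          calc ∫ ω, Y0 ω * (if S0 ω = 1 then (1:ℝ) else 0) ∂P
              = ∫ ω, ({ω | S0 ω = 1}.indicator Y0) ω ∂P := by
                apply integral_congr_ae
                filter_upwards with ω
                by_cases h2 : S0 ω = 1 <;> simp [Set.indicator_apply, Set.mem_setOf_eq, h2]
            _ = ∫ ω in {ω | S0 ω = 1}, Y0 ω ∂P := integral_indicator hB0m
  -- a.e. set equalities for observed events
  have hsetae1 : ({ω | Z ω = 1 ∧ S ω = 1} : Set Ω) =ᵐ[P] ({ω | Z ω = 1} ∩ {ω | S1 ω = 1} : Set Ω) := by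
    rw [Filter.eventuallyEq_set]
    filter_upwards [hDZ] with ω hω
    simp only [Set.mem_setOf_eq, Set.mem_inter_iff]
    rcases hZb ω with h | h
    · simp [h]
    · have hS' : S ω = S1 ω := by rw [hS ω, hω, h]; ring
      simp [h, hS']
  have hsetae0 : ({ω | Z ω = 0 ∧ S ω = 1} : Set Ω) =ᵐ[P] ({ω | Z ω = 0} ∩ {ω | S0 ω = 1} : Set Ω) := by
    rw [Filter.eventuallyEq_set]
    filter_upwards [hDZ] with ω hω
    simp only [Set.mem_setOf_eq, Set.mem_inter_iff]
    rcases hZb ω with h | h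
    · have hS' : S ω = S0 ω := by rw [hS ω, hω, h]; ring
      simp [h, hS']
    · simp [h]
  have hint1 : ∫ ω in {ω | Z ω = 1 ∧ S ω = 1}, Y ω ∂P
      = ∫ ω in {ω | Z ω = 1} ∩ {ω | S1 ω = 1}, Y1 ω ∂P := by
    rw [← integral_indicator hA1m, ← integral_indicator (hT1m.inter hB1m)]
    apply integral_congr_ae
    filter_upwards [hDZ] with ω hω
    rcases hZb ω with h | h
    · simp [Set.indicator_apply, Set.mem_setOf_eq, Set.mem_inter_iff, h]
    · have hS' : S ω = S1 ω := by rw [hS ω, hω, h]; ring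
      have hY' : Y ω = Y1 ω := by rw [hY ω, hω, h]; ring
      simp [Set.indicator_apply, Set.mem_setOf_eq, Set.mem_inter_iff, h, hS', hY']
  have hint0 : ∫ ω in {ω | Z ω = 0 ∧ S ω = 1}, Y ω ∂P
      = ∫ ω in {ω | Z ω = 0} ∩ {ω | S0 ω = 1}, Y0 ω ∂P := by
    rw [← integral_indicator hA0m, ← integral_indicator (hT0m.inter hB0m)]
    apply integral_congr_ae
    filter_upwards [hDZ] with ω hω
    rcases hZb ω with h | h
    · have hS' : S ω = S0 ω := by rw [hS ω, hω, h]; ring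
      have hY' : Y ω = Y0 ω := by rw [hY ω, hω, h]; ring
      simp [Set.indicator_apply, Set.mem_setOf_eq, Set.mem_inter_iff, h, hS', hY']
    · simp [Set.indicator_apply, Set.mem_setOf_eq, Set.mem_inter_iff, h]
  -- positivity of P(Z=0)
  have hZ0pos : 0 < (P {ω | Z ω = 0}).toReal := by
    have hpos : 0 < (P {ω | Z ω = 0}).toReal * (P {ω | S0 ω = 1}).toReal := by
      rw [← hmeas0, ← measure_congr hsetae0]; exact hZ0S1
    rcases mul_pos_iff.mp hpos with ⟨h, _⟩ | ⟨h, _⟩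
    · exact h
    · exact absurd h (not_lt.mpr ENNReal.toReal_nonneg)
  -- reduce observed conditional expectations
  have hR1 : cexp P {ω | Z ω = 1 ∧ S ω = 1} Y = cexp P {ω | S1 ω = 1} Y1 := by
    apply cexp_reduce P _ _ (ne_of_gt hZpos)
    · rw [measure_congr hsetae1]; exact hmeas1
    · rw [hint1]; exact hint1'
  have hR0 : cexp P {ω | Z ω = 0 ∧ S ω = 1} Y = cexp P {ω | S0 ω = 1} Y0 := by
    apply cexp_reduce P _ _ (ne_of_gt hZ0pos)
    · rw [measure_congr hsetae0]; exact hmeas0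
    · rw [hint0]; exact hint0'
  -- left-hand side linearity
  have hL : cexp P {ω | D1 ω = 1 ∧ D0 ω = 0 ∧ S1 ω = 1 ∧ S0 ω = 1} (fun ω => Y1 ω - Y0 ω)
      = cexp P cl' Y1 - cexp P cl' Y0 := by
    rw [cexp_congr_set P hclae]
    unfold cexp
    have hsub : ∫ ω in cl', (Y1 ω - Y0 ω) ∂P
        = (∫ ω in cl', Y1 ω ∂P) - ∫ ω in cl', Y0 ω ∂P :=
      integral_sub hY1i.integrableOn hY0i.integrableOn
    rw [hsub, sub_div]
  rw [hL, hR1, hR0, hmerge1, hmerge0]
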